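/- Let λ > 0 and C₁, C₂, C₃ ∈ ℝ, and let Ω be a cone domain {(r cos θ, r sin θ) : α < θ < β, 0 < r < ∞} with 0 ≤ α < β ≤ 2π (or Ω = ℝ² \ {0} when λ is a positive integer). Define in polar coordinates u = r^λ·(C₁cos(λθ) + C₂sin(λθ), C₂cos(λθ) − C₁sin(λθ)) and p = −(1/2)(C₁² + C₂²) r^{2λ} + C₃. Then (u, p) solves the 2D steady incompressible Navier–Stokes equations −Δu + (u·∇)u + ∇p = 0, div u = 0 on Ω; moreover this u has identically vanishing vorticity ∂₂u₁ − ∂₁u₂ = 0 on Ω. -/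

import Mathlib

/-!
Identify `(x, y)` with `x + i y`. Near any point of `Ω` (an open set avoiding `0`) a holomorphic
branch `L` of the logarithm carries the polar coordinates, `L = log r + i θ`, so the field is
`u₁ - i u₂ = w(x + i y)` with `w = (C₁ - i C₂) exp (λ L)` holomorphic. For such a field the
Cauchy–Riemann equations make `u` divergence-free, curl-free and harmonic, and then
`(u·∇)u = ∇(|u|²/2)`, which the Bernoulli pressure `p = -|u|²/2 + C₃` cancels.
-/

open Real Set

/-- Partial derivative in the first coordinate direction. -/
noncomputable def pdx (f : ℝ × ℝ → ℝ) (z : ℝ × ℝ) : ℝ := fderiv ℝ f z (1, 0)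

/-- Partial derivative in the second coordinate direction. -/
noncomputable def pdy (f : ℝ × ℝ → ℝ) (z : ℝ × ℝ) : ℝ := fderiv ℝ f z (0, 1)

/-- The 2D steady incompressible Navier--Stokes equations
`-Δu + (u·∇)u + ∇p = 0`, `div u = 0` on `Ω`. -/
def SteadyNS (u₁ u₂ p : ℝ × ℝ → ℝ) (Ω : Set (ℝ × ℝ)) : Prop :=
  ∀ z ∈ Ω,
    -(pdx (pdx u₁) z + pdy (pdy u₁) z)
        + (u₁ z * pdx u₁ z + u₂ z * pdy u₁ z) + pdx p z = 0 ∧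
    -(pdx (pdx u₂) z + pdy (pdy u₂) z)
        + (u₁ z * pdx u₂ z + u₂ z * pdy u₂ z) + pdy p z = 0 ∧
    pdx u₁ z + pdy u₂ z = 0

/-- The cone domain `{(r cos θ, r sin θ) : α < θ < β, 0 < r < ∞}`. -/
def coneDomain (α β : ℝ) : Set (ℝ × ℝ) :=
  {z | ∃ r θ : ℝ, 0 < r ∧ α < θ ∧ θ < β ∧ z = (r * cos θ, r * sin θ)}

open Filter Topology

section

open Complex

noncomputable def toComplex : (ℝ × ℝ) ≃L[ℝ] ℂ := equivRealProdCLM.symm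

@[simp]
theorem toComplex_apply (z : ℝ × ℝ) : toComplex z = z.1 + z.2 * I :=
  equivRealProdCLM_symm_apply z

section Partials

variable {f g : ℝ × ℝ → ℝ} {z : ℝ × ℝ}

theorem pdx_neg : pdx (fun y => -f y) z = -pdx f z := by
  simp [pdx]

theorem pdy_neg : pdy (fun y => -f y) z = -pdy f z := by
  simp [pdy]

theorem Filter.EventuallyEq.pdx (h : f =ᶠ[𝓝 z] g) : _root_.pdx f =ᶠ[𝓝 z] _root_.pdx g := by
  filter_upwards [h.fderiv (𝕜 := ℝ)] with y hy
  simp only [_root_.pdx, hy]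

theorem Filter.EventuallyEq.pdy (h : f =ᶠ[𝓝 z] g) : _root_.pdy f =ᶠ[𝓝 z] _root_.pdy g := by
  filter_upwards [h.fderiv (𝕜 := ℝ)] with y hy
  simp only [_root_.pdy, hy]

end Partials

def SteadyNSAt (u₁ u₂ p : ℝ × ℝ → ℝ) (z : ℝ × ℝ) : Prop :=
  -(pdx (pdx u₁) z + pdy (pdy u₁) z) + (u₁ z * pdx u₁ z + u₂ z * pdy u₁ z) + pdx p z = 0 ∧
    -(pdx (pdx u₂) z + pdy (pdy u₂) z) + (u₁ z * pdx u₂ z + u₂ z * pdy u₂ z) + pdy p z = 0 ∧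
    pdx u₁ z + pdy u₂ z = 0

theorem SteadyNSAt.congr {u₁ u₂ p v₁ v₂ q : ℝ × ℝ → ℝ} {z : ℝ × ℝ} (h : SteadyNSAt v₁ v₂ q z)
    (h₁ : u₁ =ᶠ[𝓝 z] v₁) (h₂ : u₂ =ᶠ[𝓝 z] v₂) (hp : p =ᶠ[𝓝 z] q) : SteadyNSAt u₁ u₂ p z := by
  simpa only [SteadyNSAt, h₁.self_of_nhds, h₂.self_of_nhds, h₁.pdx.self_of_nhds,
    h₁.pdy.self_of_nhds, h₂.pdx.self_of_nhds, h₂.pdy.self_of_nhds, hp.pdx.self_of_nhds,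
    hp.pdy.self_of_nhds, h₁.pdx.pdx.self_of_nhds, h₁.pdy.pdy.self_of_nhds,
    h₂.pdx.pdx.self_of_nhds, h₂.pdy.pdy.self_of_nhds] using h

theorem pdy_sub_pdx_congr {u₁ u₂ v₁ v₂ : ℝ × ℝ → ℝ} {z : ℝ × ℝ} (h₁ : u₁ =ᶠ[𝓝 z] v₁)
    (h₂ : u₂ =ᶠ[𝓝 z] v₂) : pdy u₁ z - pdx u₂ z = pdy v₁ z - pdx v₂ z := by
  rw [h₁.pdy.self_of_nhds, h₂.pdx.self_of_nhds]

section Holomorphic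

variable {w : ℂ → ℂ} {w' : ℂ} {z : ℝ × ℝ}

theorem HasDerivAt.hasFDerivAt_comp_toComplex (hw : HasDerivAt w w' (toComplex z)) :
    HasFDerivAt (fun y => w (toComplex y)) (w' • (toComplex : (ℝ × ℝ) →L[ℝ] ℂ)) z := by
  refine ((hw.hasFDerivAt.restrictScalars ℝ).comp z toComplex.hasFDerivAt).congr_fderiv ?_
  ext <;> simp [mul_comm]

theorem pdx_re_comp_toComplex (hw : HasDerivAt w w' (toComplex z)) :
    pdx (fun y => (w (toComplex y)).re) z = w'.re := by
  rw [pdx, HasFDerivAt.fderiv (f := fun y => (w (toComplex y)).re)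
    (reCLM.hasFDerivAt.comp z hw.hasFDerivAt_comp_toComplex)]
  simp

theorem pdy_re_comp_toComplex (hw : HasDerivAt w w' (toComplex z)) :
    pdy (fun y => (w (toComplex y)).re) z = -w'.im := by
  rw [pdy, HasFDerivAt.fderiv (f := fun y => (w (toComplex y)).re)
    (reCLM.hasFDerivAt.comp z hw.hasFDerivAt_comp_toComplex)]
  simp

theorem pdx_im_comp_toComplex (hw : HasDerivAt w w' (toComplex z)) :
    pdx (fun y => (w (toComplex y)).im) z = w'.im := by
  rw [pdx, HasFDerivAt.fderiv (f := fun y => (w (toComplex y)).im)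
    (imCLM.hasFDerivAt.comp z hw.hasFDerivAt_comp_toComplex)]
  simp

theorem pdy_im_comp_toComplex (hw : HasDerivAt w w' (toComplex z)) :
    pdy (fun y => (w (toComplex y)).im) z = w'.re := by
  rw [pdy, HasFDerivAt.fderiv (f := fun y => (w (toComplex y)).im)
    (imCLM.hasFDerivAt.comp z hw.hasFDerivAt_comp_toComplex)]
  simp

theorem pdx_pressure (hw : HasDerivAt w w' (toComplex z)) (C : ℝ) :
    pdx (fun y => -(1 / 2) * ‖w (toComplex y)‖ ^ 2 + C) z
      = -((w (toComplex z)).re * w'.re + (w (toComplex z)).im * w'.im) := by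
  rw [pdx, ((hw.hasFDerivAt_comp_toComplex.norm_sq.const_mul (-(1 / 2) : ℝ)).add_const C).fderiv]
  simp [Complex.inner]
  ring

theorem pdy_pressure (hw : HasDerivAt w w' (toComplex z)) (C : ℝ) :
    pdy (fun y => -(1 / 2) * ‖w (toComplex y)‖ ^ 2 + C) z
      = -((w (toComplex z)).im * w'.re - (w (toComplex z)).re * w'.im) := by
  rw [pdy, ((hw.hasFDerivAt_comp_toComplex.norm_sq.const_mul (-(1 / 2) : ℝ)).add_const C).fderiv]
  simp [Complex.inner]
  ring

theorem AnalyticAt.steadyNSAt (hw : AnalyticAt ℂ w (toComplex z)) (C : ℝ) :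
    SteadyNSAt (fun y => (w (toComplex y)).re) (fun y => -(w (toComplex y)).im)
      (fun y => -(1 / 2) * ‖w (toComplex y)‖ ^ 2 + C) z ∧
    pdy (fun y => (w (toComplex y)).re) z - pdx (fun y => -(w (toComplex y)).im) z = 0 := by
  have hnear : ∀ᶠ y in 𝓝 z, AnalyticAt ℂ w (toComplex y) :=
    toComplex.continuous.continuousAt.eventually hw.eventually_analyticAt
  have hw₂ : HasDerivAt (deriv w) (deriv (deriv w) (toComplex z)) (toComplex z) :=
    hw.deriv.differentiableAt.hasDerivAt
  have hxU₁ : pdx (fun y => (w (toComplex y)).re) =ᶠ[𝓝 z]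
      fun y => (deriv w (toComplex y)).re := by
    filter_upwards [hnear] with y hy
    exact pdx_re_comp_toComplex hy.differentiableAt.hasDerivAt
  have hyU₁ : pdy (fun y => (w (toComplex y)).re) =ᶠ[𝓝 z]
      fun y => -(deriv w (toComplex y)).im := by
    filter_upwards [hnear] with y hy
    exact pdy_re_comp_toComplex hy.differentiableAt.hasDerivAt
  have hxU₂ : pdx (fun y => -(w (toComplex y)).im) =ᶠ[𝓝 z]
      fun y => -(deriv w (toComplex y)).im := by
    filter_upwards [hnear] with y hy
    rw [pdx_neg, pdx_im_comp_toComplex hy.differentiableAt.hasDerivAt]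
  have hyU₂ : pdy (fun y => -(w (toComplex y)).im) =ᶠ[𝓝 z]
      fun y => -(deriv w (toComplex y)).re := by
    filter_upwards [hnear] with y hy
    rw [pdy_neg, pdy_im_comp_toComplex hy.differentiableAt.hasDerivAt]
  set d₂ := deriv (deriv w) (toComplex z)
  have hxxU₁ : pdx (pdx fun y => (w (toComplex y)).re) z = d₂.re := by
    rw [hxU₁.pdx.self_of_nhds, pdx_re_comp_toComplex hw₂]
  have hyyU₁ : pdy (pdy fun y => (w (toComplex y)).re) z = -d₂.re := by
    rw [hyU₁.pdy.self_of_nhds, pdy_neg, pdy_im_comp_toComplex hw₂]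
  have hxxU₂ : pdx (pdx fun y => -(w (toComplex y)).im) z = -d₂.im := by
    rw [hxU₂.pdx.self_of_nhds, pdx_neg, pdx_im_comp_toComplex hw₂]
  have hyyU₂ : pdy (pdy fun y => -(w (toComplex y)).im) z = d₂.im := by
    rw [hyU₂.pdy.self_of_nhds, pdy_neg, pdy_re_comp_toComplex hw₂, neg_neg]
  refine ⟨⟨?_, ?_, ?_⟩, ?_⟩ <;>
    simp only [hxxU₁, hyyU₁, hxxU₂, hyyU₂, pdx_pressure hw.differentiableAt.hasDerivAt,
      pdy_pressure hw.differentiableAt.hasDerivAt, hxU₁.self_of_nhds, hyU₁.self_of_nhds,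
      hxU₂.self_of_nhds, hyU₂.self_of_nhds] <;>
    ring

end Holomorphic

theorem toComplex_polar {r : ℝ} (hr : 0 < r) (θ : ℝ) :
    toComplex (r * Real.cos θ, r * Real.sin θ) = exp (Real.log r + θ * I) := by
  apply Complex.ext <;> simp [exp_re, exp_im, Real.exp_log hr, cos_ofReal_re, sin_ofReal_re]

theorem eq_polar_of_exp_eq {ζ : ℂ} {z : ℝ × ℝ} (h : exp ζ = toComplex z) :
    z = (Real.exp ζ.re * Real.cos ζ.im, Real.exp ζ.re * Real.sin ζ.im) := by
  apply toComplex.injective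
  rw [← h]
  apply Complex.ext <;> simp [exp_re, exp_im, cos_ofReal_re, sin_ofReal_re]

theorem polar_ne_zero {r : ℝ} (hr : 0 < r) (θ : ℝ) : (r * Real.cos θ, r * Real.sin θ) ≠ 0 := by
  intro h
  exact exp_ne_zero _ (by rw [← toComplex_polar hr θ, h, map_zero])

theorem zero_notMem_coneDomain (α β : ℝ) : (0 : ℝ × ℝ) ∉ coneDomain α β := by
  rintro ⟨r, θ, hr, -, -, h⟩
  exact polar_ne_zero hr θ h.symm

theorem exists_analyticAt_log {c₀ ζ₀ : ℂ} (h : exp ζ₀ = c₀) :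
    ∃ L : ℂ → ℂ, AnalyticAt ℂ L c₀ ∧ L c₀ = ζ₀ ∧ ∀ c ≠ 0, exp (L c) = c := by
  have hc₀ : c₀ ≠ 0 := h ▸ exp_ne_zero ζ₀
  refine ⟨fun c => ζ₀ + log (c / c₀), ?_, by simp [hc₀], fun c hc => ?_⟩
  · refine analyticAt_const.add ((analyticAt_clog ?_).comp analyticAt_id.div_const)
    simp [hc₀, one_mem_slitPlane]
  · rw [Complex.exp_add, exp_log (div_ne_zero hc hc₀), h, mul_div_cancel₀ c hc₀]

theorem isOpen_coneDomain (α β : ℝ) : IsOpen (coneDomain α β) := by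
  rw [isOpen_iff_mem_nhds]
  rintro _ ⟨r, θ, hr, hαθ, hθβ, rfl⟩
  obtain ⟨L, hL, hL₀, hexp⟩ := exists_analyticAt_log (toComplex_polar hr θ).symm
  have him : ∀ᶠ y in 𝓝 (r * Real.cos θ, r * Real.sin θ), (L (toComplex y)).im ∈ Ioo α β := by
    have hcont := (continuous_im.continuousAt.comp hL.continuousAt).comp
      toComplex.continuous.continuousAt (x := (r * Real.cos θ, r * Real.sin θ))
    refine hcont.eventually_mem (isOpen_Ioo.mem_nhds ?_)
    simpa only [Function.comp_apply, hL₀, add_im, ofReal_im, mul_im, ofReal_re, I_re, I_im,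
      mul_one, mul_zero, zero_add, add_zero] using ⟨hαθ, hθβ⟩
  filter_upwards [him, isOpen_ne.mem_nhds (polar_ne_zero hr θ)] with y hy hy₀
  exact ⟨_, _, Real.exp_pos _, hy.1, hy.2,
    eq_polar_of_exp_eq (hexp _ (toComplex.map_ne_zero_iff.mpr hy₀))⟩

/-- The complex velocity `u₁ - i u₂ = (C₁ - i C₂) (x + i y) ^ λ`, as a function of a
logarithm `ζ` of `x + i y`. -/
noncomputable def powerVelocity (lam C₁ C₂ : ℝ) (ζ : ℂ) : ℂ := (C₁ - C₂ * I) * exp (lam * ζ)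

section PowerVelocity

variable (lam C₁ C₂ : ℝ) (ζ : ℂ)

theorem powerVelocity_re : (powerVelocity lam C₁ C₂ ζ).re
    = Real.exp ζ.re ^ lam * (C₁ * Real.cos (lam * ζ.im) + C₂ * Real.sin (lam * ζ.im)) := by
  simp [powerVelocity, exp_re, exp_im, ← Real.exp_mul, mul_comm ζ.re lam]
  ring

theorem powerVelocity_im : (powerVelocity lam C₁ C₂ ζ).im
    = -(Real.exp ζ.re ^ lam * (C₂ * Real.cos (lam * ζ.im) - C₁ * Real.sin (lam * ζ.im))) := by
  simp [powerVelocity, exp_re, exp_im, ← Real.exp_mul, mul_comm ζ.re lam]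
  ring

theorem sq_norm_powerVelocity :
    ‖powerVelocity lam C₁ C₂ ζ‖ ^ 2 = (C₁ ^ 2 + C₂ ^ 2) * Real.exp ζ.re ^ (2 * lam) := by
  rw [powerVelocity, norm_mul, mul_pow, Complex.norm_exp, ← Real.exp_mul, ← Real.exp_nat_mul,
    Complex.sq_norm, normSq_apply]
  simp only [sub_re, ofReal_re, mul_re, I_re, ofReal_im, I_im, sub_im, mul_im]
  ring_nf

end PowerVelocity

theorem steadyNSAt_of_polar_power (lam C₁ C₂ C₃ : ℝ) {Ω : Set (ℝ × ℝ)} (hΩ : IsOpen Ω)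
    (hΩ₀ : (0 : ℝ × ℝ) ∉ Ω) {u₁ u₂ p : ℝ × ℝ → ℝ}
    (hu : ∀ r θ : ℝ, 0 < r → (r * Real.cos θ, r * Real.sin θ) ∈ Ω →
      u₁ (r * Real.cos θ, r * Real.sin θ)
          = r ^ lam * (C₁ * Real.cos (lam * θ) + C₂ * Real.sin (lam * θ)) ∧
      u₂ (r * Real.cos θ, r * Real.sin θ)
          = r ^ lam * (C₂ * Real.cos (lam * θ) - C₁ * Real.sin (lam * θ)) ∧
      p (r * Real.cos θ, r * Real.sin θ)
          = -(1/2) * (C₁^2 + C₂^2) * r ^ (2 * lam) + C₃)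
    {z₀ : ℝ × ℝ} (hz₀ : z₀ ∈ Ω) :
    SteadyNSAt u₁ u₂ p z₀ ∧ pdy u₁ z₀ - pdx u₂ z₀ = 0 := by
  have hne : ∀ z ∈ Ω, toComplex z ≠ 0 := fun z hz h =>
    hΩ₀ (toComplex.map_eq_zero_iff.mp h ▸ hz)
  obtain ⟨L, hL, -, hexp⟩ := exists_analyticAt_log (exp_log (hne z₀ hz₀))
  set w := fun c => powerVelocity lam C₁ C₂ (L c)
  have hw : AnalyticAt ℂ w (toComplex z₀) := by
    simp only [w, powerVelocity]
    fun_prop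
  have hfield : ∀ᶠ z in 𝓝 z₀, u₁ z = (w (toComplex z)).re ∧ u₂ z = -(w (toComplex z)).im ∧
      p z = -(1 / 2) * ‖w (toComplex z)‖ ^ 2 + C₃ := by
    filter_upwards [hΩ.mem_nhds hz₀] with z hz
    have hpolar := eq_polar_of_exp_eq (hexp _ (hne z hz))
    obtain ⟨h₁, h₂, h₃⟩ := hu _ _ (Real.exp_pos _) (hpolar ▸ hz)
    rw [← hpolar] at h₁ h₂ h₃
    rw [h₁, h₂, h₃, powerVelocity_re, powerVelocity_im, sq_norm_powerVelocity]
    refine ⟨rfl, by ring, by ring⟩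
  obtain ⟨hNS, hvort⟩ := hw.steadyNSAt C₃
  refine ⟨hNS.congr (hfield.mono fun z h => h.1) (hfield.mono fun z h => h.2.1)
    (hfield.mono fun z h => h.2.2), ?_⟩
  rw [pdy_sub_pdx_congr (hfield.mono fun z h => h.1) (hfield.mono fun z h => h.2.1), hvort]

end

theorem power_solution_general (lam : ℝ) (C₁ C₂ C₃ : ℝ)
    (Ω : Set (ℝ × ℝ))
    (hΩ : (∃ α β : ℝ, 0 ≤ α ∧ α < β ∧ β ≤ 2 * π ∧ Ω = coneDomain α β) ∨
      ((∃ n : ℕ, 0 < n ∧ lam = (n : ℝ)) ∧ Ω = {z : ℝ × ℝ | z ≠ 0}))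
    (u₁ u₂ p : ℝ × ℝ → ℝ)
    (hu : ∀ r θ : ℝ, 0 < r → (r * cos θ, r * sin θ) ∈ Ω →
      u₁ (r * cos θ, r * sin θ)
          = r ^ lam * (C₁ * cos (lam * θ) + C₂ * sin (lam * θ)) ∧
      u₂ (r * cos θ, r * sin θ)
          = r ^ lam * (C₂ * cos (lam * θ) - C₁ * sin (lam * θ)) ∧
      p (r * cos θ, r * sin θ)
          = -(1/2) * (C₁^2 + C₂^2) * r ^ (2 * lam) + C₃) :
    SteadyNS u₁ u₂ p Ω ∧ ∀ z ∈ Ω, pdy u₁ z - pdx u₂ z = 0 := by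
  obtain ⟨hΩopen, hΩ₀⟩ : IsOpen Ω ∧ (0 : ℝ × ℝ) ∉ Ω := by
    rcases hΩ with ⟨α, β, -, -, -, rfl⟩ | ⟨-, rfl⟩
    · exact ⟨isOpen_coneDomain α β, zero_notMem_coneDomain α β⟩
    · exact ⟨isOpen_ne, fun h => h rfl⟩
  have h : ∀ z ∈ Ω, SteadyNSAt u₁ u₂ p z ∧ pdy u₁ z - pdx u₂ z = 0 := fun z hz =>
    steadyNSAt_of_polar_power lam C₁ C₂ C₃ hΩopen hΩ₀ hu hz
  exact ⟨fun z hz => (h z hz).1, fun z hz => (h z hz).2⟩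

/-- The irrotational field `u = r^λ (C₁cos λθ + C₂sin λθ, C₂cos λθ − C₁sin λθ)`
with pressure `p = −(1/2)(C₁² + C₂²) r^{2λ} + C₃` solves the 2D steady
Navier--Stokes equations on a cone domain (or on `ℝ² \ {0}` when `λ ∈ ℕ⁺`),
and its vorticity vanishes identically. -/
theorem power_solution (lam : ℝ) (hlam : 0 < lam) (C₁ C₂ C₃ : ℝ)
    (Ω : Set (ℝ × ℝ))
    (hΩ : (∃ α β : ℝ, 0 ≤ α ∧ α < β ∧ β ≤ 2 * π ∧ Ω = coneDomain α β) ∨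
      ((∃ n : ℕ, 0 < n ∧ lam = (n : ℝ)) ∧ Ω = {z : ℝ × ℝ | z ≠ 0}))
    (u₁ u₂ p : ℝ × ℝ → ℝ)
    (hu : ∀ r θ : ℝ, 0 < r → (r * cos θ, r * sin θ) ∈ Ω →
      u₁ (r * cos θ, r * sin θ)
          = r ^ lam * (C₁ * cos (lam * θ) + C₂ * sin (lam * θ)) ∧
      u₂ (r * cos θ, r * sin θ)
          = r ^ lam * (C₂ * cos (lam * θ) - C₁ * sin (lam * θ)) ∧
      p (r * cos θ, r * sin θ)
          = -(1/2) * (C₁^2 + C₂^2) * r ^ (2 * lam) + C₃) :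
    SteadyNS u₁ u₂ p Ω ∧ ∀ z ∈ Ω, pdy u₁ z - pdx u₂ z = 0 :=
  power_solution_general lam C₁ C₂ C₃ Ω hΩ u₁ u₂ p hu
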